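/- arXiv:2303.16413 — 2 statements merged into one kernel-verified Lean document; each statement's English description precedes it below -/
import Mathlib

section
/- Let B be an ordered branching program of length n and width w and let G : {0,1}^s → {0,1}^n be any function. Then for every i < n: ∑_{v∈V_{i+1}} |E[B_{→v}] − E_G[B_{→v}]| ≤ ∑_{v∈V_i} |E[B_{→v}] − E_G[B_{→v}]| + ∑_{v∈V_i} |E_G[N_v]|. -/
open Finset
open scoped Classical

/-- An ordered branching program of length `n` and width `w`: each layer's states
are identified with `Fin w`; `next i v b` is the successor of state `v` in layer `i`
on bit `b`; states in the last layer are labeled by `label`. -/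
structure OBP (n w : ℕ) where
  start : Fin w
  next : ℕ → Fin w → Bool → Fin w
  label : Fin w → Bool

namespace OBP

/-- The state reached from state `v` in layer `i` after reading `k` bits. -/
def walk {n w : ℕ} (B : OBP n w) : (k : ℕ) → (i : ℕ) → Fin w → (Fin k → Bool) → Fin w
  | 0, _, v, _ => v
  | k + 1, i, v, x => walk B k (i + 1) (B.next i v (x 0)) (fun j => x j.succ)

/-- The state in layer `i` reached from the start state on a length-`i` input. -/
def reach {n w : ℕ} (B : OBP n w) {i : ℕ} (x : Fin i → Bool) : Fin w :=
  B.walk i 0 B.start x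

/-- The boolean output of the program on an `n`-bit input. -/
def eval {n w : ℕ} (B : OBP n w) (x : Fin n → Bool) : Bool :=
  B.label (B.reach x)

end OBP

/-- Expectation of a real-valued function under the uniform distribution. -/
noncomputable def Exp {α : Type*} [Fintype α] (f : α → ℝ) : ℝ :=
  (∑ a, f a) / (Fintype.card α : ℝ)

/-- Probability of an event under the uniform distribution. -/
noncomputable def prob {α : Type*} [Fintype α] (p : α → Prop) : ℝ :=
  ((Finset.univ.filter p).card : ℝ) / (Fintype.card α : ℝ)

/-- A boolean viewed as a real number. -/
def bval (b : Bool) : ℝ := if b then 1 else 0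

/-- The first `k` bits of `x` (padded with `false` if `k > n`). -/
def bits {n : ℕ} (x : Fin n → Bool) (k : ℕ) : Fin k → Bool :=
  fun j => if h : (j : ℕ) < n then x ⟨j, h⟩ else false

/-- The pseudo-expectation `E_G[f]` of `f : {0,1}^i → ℝ` under the generator `G`,
where `f` is fed the length-`i` prefix of the output of `G`. -/
noncomputable def ExpG {s n : ℕ} (G : (Fin s → Bool) → Fin n → Bool) (i : ℕ)
    (f : (Fin i → Bool) → ℝ) : ℝ :=
  Exp (fun y => f (bits (G y) i))

/-- The indicator `B_{→v}` of reaching state `v` in layer `i`. -/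
def reachInd {n w : ℕ} (B : OBP n w) {i : ℕ} (v : Fin w) (x : Fin i → Bool) : ℝ :=
  if B.reach x = v then 1 else 0

/-- The next-bit bias function `N_v` for a state `v` in layer `i`. -/
def Nv {n w : ℕ} (B : OBP n w) {i : ℕ} (v : Fin w) (x : Fin (i + 1) → Bool) : ℝ :=
  if B.reach (fun j : Fin i => x j.castSucc) = v then
    (if x (Fin.last i) then 1 else -1)
  else 0

/-!
Classify the inputs of length `i + 1` by the edge `(v, b)` of layer `i` that the computation
takes. Both distributions on layer `i + 1` are the pushforward of the resulting edge weights
along the transition map, and pushing forward does not increase the ℓ¹ distance. Under the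
uniform distribution both edges out of `v` have weight `p / 2`, where `p = E[B_{→v}]`; under
`G` the two edges out of `v` have weights `q₀, q₁` with `q₀ + q₁ = E_G[B_{→v}]` and
`q₁ - q₀ = E_G[N_v]`. Now `|p / 2 - q₁| + |p / 2 - q₀| ≤ |p - (q₀ + q₁)| + |q₁ - q₀|`.
-/

lemma Finset.sum_abs_sum_fiberwise_le {ι κ G : Type*} [Fintype κ] [DecidableEq κ]
    [AddCommGroup G] [LinearOrder G] [IsOrderedAddMonoid G]
    (s : Finset ι) (g : ι → κ) (f : ι → G) :
    ∑ k, |∑ j ∈ s with g j = k, f j| ≤ ∑ j ∈ s, |f j| :=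
  calc ∑ k, |∑ j ∈ s with g j = k, f j|
      ≤ ∑ k, ∑ j ∈ s with g j = k, |f j| := sum_le_sum fun _ _ => abs_sum_le_sum_abs _ _
    _ = ∑ j ∈ s, |f j| := sum_fiberwise s g _

lemma abs_half_sub_add_abs_half_sub_le (p q₀ q₁ : ℝ) :
    |p / 2 - q₁| + |p / 2 - q₀| ≤ |p - (q₀ + q₁)| + |q₁ - q₀| := by
  cases abs_cases (p / 2 - q₁) <;> cases abs_cases (p / 2 - q₀) <;>
    cases abs_cases (p - (q₀ + q₁)) <;> cases abs_cases (q₁ - q₀) <;> linarith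

section Exp

variable {α : Type*} [Fintype α]

lemma Exp_sum {ι : Type*} (s : Finset ι) (f : ι → α → ℝ) :
    Exp (fun a => ∑ j ∈ s, f j a) = ∑ j ∈ s, Exp (f j) := by
  rw [Exp, sum_comm, sum_div]
  rfl

lemma Exp_add (f g : α → ℝ) : Exp (fun a => f a + g a) = Exp f + Exp g := by
  simp only [Exp, sum_add_distrib, add_div]

lemma Exp_sub (f g : α → ℝ) : Exp (fun a => f a - g a) = Exp f - Exp g := by
  simp only [Exp, sum_sub_distrib, sub_div]

lemma Exp_init_mul_last {i : ℕ} (f : (Fin i → α) → ℝ) (g : α → ℝ) :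
    Exp (fun x : Fin (i + 1) → α => f (Fin.init x) * g (x (Fin.last i))) = Exp f * Exp g := by
  have hsum : ∑ x : Fin (i + 1) → α, f (Fin.init x) * g (x (Fin.last i))
      = ∑ p : α × (Fin i → α), f p.2 * g p.1 := by
    rw [← (Fin.snocEquiv fun _ => α).sum_comp]
    simp [Fin.snocEquiv]
  simp only [Exp, hsum, Fintype.sum_prod_type, Fintype.card_pi, prod_const, card_univ,
    Fintype.card_fin, pow_succ, Nat.cast_mul, Nat.cast_pow]
  rw [sum_comm, ← sum_mul_sum, mul_div_mul_comm]

end Exp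

lemma init_bits {n : ℕ} (x : Fin n → Bool) (i : ℕ) :
    Fin.init (bits x (i + 1)) = bits x i := by
  funext j
  simp [Fin.init, bits]

namespace OBP

variable {n w : ℕ} (B : OBP n w)

lemma walk_succ_eq_next_walk_init (k i : ℕ) (v : Fin w) (x : Fin (k + 1) → Bool) :
    B.walk (k + 1) i v x = B.next (i + k) (B.walk k i v (Fin.init x)) (x (Fin.last k)) := by
  induction k generalizing i v with
  | zero => rfl
  | succ k ih =>
    rw [walk, ih, walk, Fin.succ_last, show i + 1 + k = i + (k + 1) by omega]
    rfl

lemma reach_succ {i : ℕ} (x : Fin (i + 1) → Bool) :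
    B.reach x = B.next i (B.reach (Fin.init x)) (x (Fin.last i)) := by
  rw [reach, walk_succ_eq_next_walk_init, zero_add]
  rfl

/-- `p = (v, b)` is the edge leaving state `v` of layer `i` on bit `b`. -/
def edgeInd (i : ℕ) (p : Fin w × Bool) (x : Fin (i + 1) → Bool) : ℝ :=
  if (B.reach (Fin.init x), x (Fin.last i)) = p then 1 else 0

lemma reachInd_succ {i : ℕ} (u : Fin w) :
    reachInd B u =
      fun x : Fin (i + 1) → Bool => ∑ p with B.next i p.1 p.2 = u, B.edgeInd i p x := by
  funext x
  simp only [edgeInd, sum_ite_eq, mem_filter, mem_univ, true_and, reachInd, reach_succ]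

lemma edgeInd_eq_mul {i : ℕ} (p : Fin w × Bool) (x : Fin (i + 1) → Bool) :
    B.edgeInd i p x = reachInd B p.1 (Fin.init x) * if x (Fin.last i) = p.2 then 1 else 0 := by
  simp only [edgeInd, reachInd, Prod.ext_iff, ite_zero_mul_ite_zero, mul_one]

lemma reachInd_init {i : ℕ} (v : Fin w) (x : Fin (i + 1) → Bool) :
    reachInd B v (Fin.init x) = B.edgeInd i (v, false) x + B.edgeInd i (v, true) x := by
  cases h : x (Fin.last i) <;> simp [edgeInd_eq_mul, h]

lemma Nv_eq_edgeInd_sub {i : ℕ} (v : Fin w) :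
    Nv B v =
      fun x : Fin (i + 1) → Bool => B.edgeInd i (v, true) x - B.edgeInd i (v, false) x := by
  funext x
  rw [Nv, show (fun j : Fin i => x j.castSucc) = Fin.init x from rfl]
  cases h : x (Fin.last i) <;> simp [edgeInd_eq_mul, reachInd, h, neg_ite]

lemma Exp_edgeInd {i : ℕ} (p : Fin w × Bool) :
    Exp (B.edgeInd i p) = Exp (fun x : Fin i → Bool => reachInd B p.1 x) / 2 := by
  have hbit : Exp (fun b : Bool => if b = p.2 then (1 : ℝ) else 0) = 1 / 2 := by
    simp [Exp]
  rw [show B.edgeInd i p = _ from funext (B.edgeInd_eq_mul p),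
    Exp_init_mul_last (reachInd B p.1) (fun b => if b = p.2 then 1 else 0), hbit, mul_one_div]

end OBP

section ExpG

variable {s n : ℕ} (G : (Fin s → Bool) → Fin n → Bool)

lemma ExpG_sum {ι : Type*} (k : ℕ) (t : Finset ι) (f : ι → (Fin k → Bool) → ℝ) :
    ExpG G k (fun x => ∑ j ∈ t, f j x) = ∑ j ∈ t, ExpG G k (f j) :=
  Exp_sum t fun j y => f j (bits (G y) k)

lemma ExpG_add (k : ℕ) (f g : (Fin k → Bool) → ℝ) :
    ExpG G k (fun x => f x + g x) = ExpG G k f + ExpG G k g :=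
  Exp_add _ _

lemma ExpG_sub (k : ℕ) (f g : (Fin k → Bool) → ℝ) :
    ExpG G k (fun x => f x - g x) = ExpG G k f - ExpG G k g :=
  Exp_sub _ _

lemma ExpG_comp_init (i : ℕ) (f : (Fin i → Bool) → ℝ) :
    ExpG G (i + 1) (fun x => f (Fin.init x)) = ExpG G i f := by
  simp only [ExpG, init_bits]

end ExpG

namespace OBP

variable {n w s : ℕ} (B : OBP n w) (G : (Fin s → Bool) → Fin n → Bool)

lemma Exp_sub_ExpG_reachInd_succ (i : ℕ) (u : Fin w) :
    Exp (fun x : Fin (i + 1) → Bool => reachInd B u x) - ExpG G (i + 1) (reachInd B u) =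
      ∑ p with B.next i p.1 p.2 = u, (Exp (B.edgeInd i p) - ExpG G (i + 1) (B.edgeInd i p)) := by
  rw [reachInd_succ, Exp_sum, ExpG_sum, sum_sub_distrib]

lemma sum_bool_abs_Exp_sub_ExpG_edgeInd_le (i : ℕ) (v : Fin w) :
    ∑ b, |Exp (B.edgeInd i (v, b)) - ExpG G (i + 1) (B.edgeInd i (v, b))| ≤
      |Exp (fun x : Fin i → Bool => reachInd B v x) - ExpG G i (reachInd B v)| +
        |ExpG G (i + 1) (Nv B v)| := by
  have hsplit : ExpG G i (reachInd B v) =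
      ExpG G (i + 1) (B.edgeInd i (v, false)) + ExpG G (i + 1) (B.edgeInd i (v, true)) := by
    rw [← ExpG_comp_init, ← ExpG_add]
    simp only [reachInd_init]
  have hNv : ExpG G (i + 1) (Nv B v) =
      ExpG G (i + 1) (B.edgeInd i (v, true)) - ExpG G (i + 1) (B.edgeInd i (v, false)) := by
    rw [Nv_eq_edgeInd_sub, ExpG_sub]
  rw [Fintype.sum_bool, Exp_edgeInd, Exp_edgeInd, hsplit, hNv]
  exact abs_half_sub_add_abs_half_sub_le _ _ _

end OBP

theorem stmt1_general {n w s : ℕ} (B : OBP n w) (G : (Fin s → Bool) → Fin n → Bool)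
    (i : ℕ) :
    ∑ v : Fin w,
        |Exp (fun x : Fin (i + 1) → Bool => reachInd B v x) - ExpG G (i + 1) (reachInd B v)| ≤
      (∑ v : Fin w,
        |Exp (fun x : Fin i → Bool => reachInd B v x) - ExpG G i (reachInd B v)|) +
      ∑ v : Fin w, |ExpG G (i + 1) (Nv B v)| := by
  simp only [B.Exp_sub_ExpG_reachInd_succ G i]
  calc _ ≤ ∑ p : Fin w × Bool, |Exp (B.edgeInd i p) - ExpG G (i + 1) (B.edgeInd i p)| :=
        sum_abs_sum_fiberwise_le _ _ _
    _ ≤ _ := by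
      rw [Fintype.sum_prod_type, ← sum_add_distrib]
      exact sum_le_sum fun v _ => B.sum_bool_abs_Exp_sub_ExpG_edgeInd_le G i v

theorem stmt1 {n w s : ℕ} (B : OBP n w) (G : (Fin s → Bool) → Fin n → Bool)
    (i : ℕ) (hi : i < n) :
    ∑ v : Fin w,
        |Exp (fun x : Fin (i + 1) → Bool => reachInd B v x) - ExpG G (i + 1) (reachInd B v)| ≤
      (∑ v : Fin w,
        |Exp (fun x : Fin i → Bool => reachInd B v x) - ExpG G i (reachInd B v)|) +
      ∑ v : Fin w, |ExpG G (i + 1) (Nv B v)| :=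
  stmt1_general B G i
end

section
/- Let B be an ordered branching program of length n and width w and H : {0,1}^s → {0,1}^n. Suppose the real numbers p̃_{x,i} (x ∈ {0,1}^s, 0 ≤ i ≤ n) satisfy the local consistency tests: (1) for every x ∈ {0,1}^s, i < n, and x_0, x_1 ∈ {0,1}^s with B[v_i(x),0] ∼ v_{i+1}(x_0) and B[v_i(x),1] ∼ v_{i+1}(x_1), |p̃_{x,i} − (p̃_{x_0,i+1} + p̃_{x_1,i+1})/2| ≤ 5ε; (2) for every x, x′ ∈ {0,1}^s and i ≤ n with v_i(x) ∼ v_i(x′), |p̃_{x,i} − p̃_{x′,i}| ≤ 5ε; (3) p̃_{x,n} = B(H(x)) for every x. Let q assign to every state of B a value in [0,1] such that: (a) q_v equals the {0,1}-label of v for every v ∈ V_n; (b) q_v = (q_{B[v,0]} + q_{B[v,1]})/2 for every verified state v ∈ V_i with i < n; (c) |p̃_{x,i} − q_v| ≤ 5ε for every unverified state v ∈ V_i and every x ∈ {0,1}^s with v_i(x) = v. Then for every 0 ≤ i ≤ n and every x ∈ {0,1}^s: |p̃_{x,i} − q_{v_i(x)}| ≤ 5·ε·(n − i). -/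
open Finset
open scoped Classical

/-- `p_{v→}`: the probability of acceptance starting from state `v` in layer `i`,
over a uniformly random suffix of length `n - i`. -/
noncomputable def pAcc {n w : ℕ} (B : OBP n w) (i : ℕ) (v : Fin w) : ℝ :=
  prob (fun r : Fin (n - i) → Bool => B.label (B.walk (n - i) i v r) = true)

/-- `H` is an `ε`-hitting set generator for all OBPs of length `n` and width `W`. -/
noncomputable def IsHSG (n W s : ℕ) (H : (Fin s → Bool) → Fin n → Bool) (ε : ℝ) : Prop :=
  ∀ B' : OBP n W, ε ≤ Exp (fun x : Fin n → Bool => bval (B'.eval x)) →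
    ∃ y : Fin s → Bool, B'.eval (H y) = true

/-- States `u` and `u'` in layer `i` are indistinguishable under `H`:
they behave identically on the length-`(n-i)` prefix of every output of `H`. -/
def Indist {n w s : ℕ} (B : OBP n w) (H : (Fin s → Bool) → Fin n → Bool)
    (i : ℕ) (u u' : Fin w) : Prop :=
  ∀ y : Fin s → Bool,
    B.walk (n - i) i u (bits (H y) (n - i)) = B.walk (n - i) i u' (bits (H y) (n - i))

/-- `v_i(x)`: the state in layer `i` reached from the start
on the length-`i` prefix of `H x`. -/
def vAt {n w s : ℕ} (B : OBP n w) (H : (Fin s → Bool) → Fin n → Bool)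
    (i : ℕ) (x : Fin s → Bool) : Fin w :=
  B.reach (bits (H x) i)

/-- A state `v` in layer `i < n` is unverified if one of its successors is not
reached (in layer `i+1`) by any output of `H`. -/
def Unverified {n w s : ℕ} (B : OBP n w) (H : (Fin s → Bool) → Fin n → Bool)
    (i : ℕ) (v : Fin w) : Prop :=
  i < n ∧ ∃ b : Bool, ∀ x' : Fin s → Bool, B.next i v b ≠ vAt B H (i + 1) x'

/-!
Downward induction on the layer `i`. In the last layer `p̃` and `q` agree by (3) and (a). At an
unverified state (c) bounds the error directly. At a verified state both successors are of the
form `v_{i+1}(x_b)`, so test (1) compares `p̃_{x,i}` with the average of the `p̃_{x_b,i+1}`, which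
by induction are within `5ε(n - i - 1)` of the `q`-values whose average is `q_{v_i(x)}` by (b).
-/

theorem abs_sub_avg_le_add {a b₀ b₁ c₀ c₁ δ e : ℝ} (h : |a - (b₀ + b₁) / 2| ≤ δ)
    (h₀ : |b₀ - c₀| ≤ e) (h₁ : |b₁ - c₁| ≤ e) : |a - (c₀ + c₁) / 2| ≤ δ + e := by
  obtain ⟨h, h'⟩ := abs_le.mp h
  obtain ⟨h₀, h₀'⟩ := abs_le.mp h₀
  obtain ⟨h₁, h₁'⟩ := abs_le.mp h₁
  exact abs_le.mpr ⟨by linarith, by linarith⟩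

theorem bits_self {n : ℕ} (x : Fin n → Bool) : bits x n = x := by
  funext j
  simp [bits, j.isLt]

section

variable {n w s : ℕ} (B : OBP n w) (H : (Fin s → Bool) → Fin n → Bool)

theorem vAt_self (x : Fin s → Bool) : vAt B H n x = B.reach (H x) := by
  rw [vAt, bits_self]

variable {B H}

theorem Indist.of_eq {i : ℕ} {u u' : Fin w} (h : u = u') : Indist B H i u u' :=
  fun _ => by rw [h]

theorem exists_vAt_eq_next_of_not_unverified {i : ℕ} {v : Fin w} (hi : i < n)
    (hv : ¬ Unverified B H i v) (b : Bool) : ∃ x', B.next i v b = vAt B H (i + 1) x' := by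
  by_contra! h
  exact hv ⟨hi, b, h⟩

theorem abs_sub_le_add_of_succ {pt : (Fin s → Bool) → ℕ → ℝ} {q : ℕ → Fin w → ℝ} {i : ℕ}
    {δ e : ℝ} (hi : i < n)
    (h1 : ∀ x x₀ x₁ : Fin s → Bool,
      Indist B H (i + 1) (B.next i (vAt B H i x) false) (vAt B H (i + 1) x₀) →
      Indist B H (i + 1) (B.next i (vAt B H i x) true) (vAt B H (i + 1) x₁) →
      |pt x i - (pt x₀ (i + 1) + pt x₁ (i + 1)) / 2| ≤ δ)
    (hqver : ∀ v : Fin w, ¬ Unverified B H i v →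
      q i v = (q (i + 1) (B.next i v false) + q (i + 1) (B.next i v true)) / 2)
    (hqunv : ∀ v : Fin w, Unverified B H i v →
      ∀ x : Fin s → Bool, vAt B H i x = v → |pt x i - q i v| ≤ δ)
    (he : 0 ≤ e) (ih : ∀ x, |pt x (i + 1) - q (i + 1) (vAt B H (i + 1) x)| ≤ e)
    (x : Fin s → Bool) : |pt x i - q i (vAt B H i x)| ≤ δ + e := by
  by_cases hv : Unverified B H i (vAt B H i x)
  · exact (hqunv _ hv x rfl).trans (le_add_of_nonneg_right he)
  · obtain ⟨x₀, hx₀⟩ := exists_vAt_eq_next_of_not_unverified hi hv false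
    obtain ⟨x₁, hx₁⟩ := exists_vAt_eq_next_of_not_unverified hi hv true
    have hpt := h1 x x₀ x₁ (Indist.of_eq hx₀) (Indist.of_eq hx₁)
    rw [hqver _ hv, hx₀, hx₁]
    exact abs_sub_avg_le_add hpt (ih x₀) (ih x₁)

end

theorem stmt16_general {n w s : ℕ} (B : OBP n w) (ε : ℝ)
    (H : (Fin s → Bool) → Fin n → Bool)
    (pt : (Fin s → Bool) → ℕ → ℝ)
    (h1 : ∀ (x x₀ x₁ : Fin s → Bool) (i : ℕ), i < n →
      Indist B H (i + 1) (B.next i (vAt B H i x) false) (vAt B H (i + 1) x₀) →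
      Indist B H (i + 1) (B.next i (vAt B H i x) true) (vAt B H (i + 1) x₁) →
      |pt x i - (pt x₀ (i + 1) + pt x₁ (i + 1)) / 2| ≤ 5 * ε)
    (h2 : ∀ (x x' : Fin s → Bool) (i : ℕ), i ≤ n →
      Indist B H i (vAt B H i x) (vAt B H i x') → |pt x i - pt x' i| ≤ 5 * ε)
    (h3 : ∀ x : Fin s → Bool, pt x n = bval (B.eval (H x)))
    (q : ℕ → Fin w → ℝ)
    (hqn : ∀ v : Fin w, q n v = bval (B.label v))
    (hqver : ∀ i : ℕ, i < n → ∀ v : Fin w, ¬ Unverified B H i v →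
      q i v = (q (i + 1) (B.next i v false) + q (i + 1) (B.next i v true)) / 2)
    (hqunv : ∀ (i : ℕ) (v : Fin w), Unverified B H i v →
      ∀ x : Fin s → Bool, vAt B H i x = v → |pt x i - q i v| ≤ 5 * ε) :
    ∀ i : ℕ, i ≤ n → ∀ x : Fin s → Bool,
      |pt x i - q i (vAt B H i x)| ≤ 5 * ε * ((n - i : ℕ) : ℝ) := by
  have hε : 0 ≤ 5 * ε :=
    (abs_nonneg _).trans (h2 (fun _ => false) _ n le_rfl (Indist.of_eq rfl))
  intro i hi
  induction hi using Nat.decreasingInduction with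
  | self => intro x; simp [h3, hqn, vAt_self, OBP.eval]
  | of_succ k hk ih =>
    intro x
    have hstep := abs_sub_le_add_of_succ hk (h1 · · · k hk) (hqver k hk) (hqunv k)
      (mul_nonneg hε (Nat.cast_nonneg _)) ih x
    have hnk : ((n - k : ℕ) : ℝ) = ((n - (k + 1) : ℕ) : ℝ) + 1 := by norm_cast; omega
    rw [hnk]
    linarith

theorem stmt16 {n w s : ℕ} (B : OBP n w) (ε : ℝ)
    (H : (Fin s → Bool) → Fin n → Bool)
    (pt : (Fin s → Bool) → ℕ → ℝ)
    (h1 : ∀ (x x₀ x₁ : Fin s → Bool) (i : ℕ), i < n →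
      Indist B H (i + 1) (B.next i (vAt B H i x) false) (vAt B H (i + 1) x₀) →
      Indist B H (i + 1) (B.next i (vAt B H i x) true) (vAt B H (i + 1) x₁) →
      |pt x i - (pt x₀ (i + 1) + pt x₁ (i + 1)) / 2| ≤ 5 * ε)
    (h2 : ∀ (x x' : Fin s → Bool) (i : ℕ), i ≤ n →
      Indist B H i (vAt B H i x) (vAt B H i x') → |pt x i - pt x' i| ≤ 5 * ε)
    (h3 : ∀ x : Fin s → Bool, pt x n = bval (B.eval (H x)))
    (q : ℕ → Fin w → ℝ)
    (hq01 : ∀ i : ℕ, i ≤ n → ∀ v : Fin w, q i v ∈ Set.Icc (0 : ℝ) 1)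
    (hqn : ∀ v : Fin w, q n v = bval (B.label v))
    (hqver : ∀ i : ℕ, i < n → ∀ v : Fin w, ¬ Unverified B H i v →
      q i v = (q (i + 1) (B.next i v false) + q (i + 1) (B.next i v true)) / 2)
    (hqunv : ∀ (i : ℕ) (v : Fin w), Unverified B H i v →
      ∀ x : Fin s → Bool, vAt B H i x = v → |pt x i - q i v| ≤ 5 * ε) :
    ∀ i : ℕ, i ≤ n → ∀ x : Fin s → Bool,
      |pt x i - q i (vAt B H i x)| ≤ 5 * ε * ((n - i : ℕ) : ℝ) :=
  stmt16_general B ε H pt h1 h2 h3 q hqn hqver hqunv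
end
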